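/- Every nonnegative separable polynomial in n real variables can be written as a sum of nonnegative univariate polynomials; more precisely, if p(x) = ∑_{i=1}^n p_i(x_i) satisfies p(x) ≥ 0 for all x ∈ ℝⁿ, then there exist univariate polynomials r_1, …, r_n with r_i(t) ≥ 0 for all t ∈ ℝ and a constant c ≥ 0 such that p(x) = ∑_{i=1}^n r_i(x_i) + c for all x ∈ ℝⁿ. In particular, a separable polynomial is nonnegative if and only if it is a sum of squares of polynomials. -/

import Mathlib

/-!
Fixing all coordinates but one shows that each `pᵢ` is bounded below; subtracting its infimum
`mᵢ` leaves a nonnegative univariate polynomial, and `∑ mᵢ ≥ 0` because `p` comes arbitrarily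
close to `∑ mᵢ`. A nonnegative univariate polynomial is a sum of squares by induction on the
degree: a real root is a local minimum, hence a double root, and a non-real root yields a factor
`(X - a)² + b²`; dividing out either factor keeps the quotient nonnegative.
-/

open MvPolynomial

/-- A polynomial is a sum of squares. -/
def IsSOS {σ : Type*} (p : MvPolynomial σ ℝ) : Prop :=
  ∃ (m : ℕ) (q : Fin m → MvPolynomial σ ℝ), p = ∑ j, q j ^ 2

theorem IsSumSq.map {R S F : Type*} [NonAssocSemiring R] [NonAssocSemiring S] [FunLike F R S]
    [RingHomClass F R S] (f : F) {s : R} (hs : IsSumSq s) : IsSumSq (f s) := by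
  induction hs with
  | zero => simp
  | sq_add a _ ih => simpa using ih.sq_add (f a)

theorem isSOS_iff_isSumSq {σ : Type*} {p : MvPolynomial σ ℝ} : IsSOS p ↔ IsSumSq p := by
  refine ⟨fun ⟨m, q, hq⟩ => hq ▸ IsSumSq.sum_sq _ q, fun h => ?_⟩
  induction h with
  | zero => exact ⟨0, 0, by simp⟩
  | sq_add a _ ih =>
    obtain ⟨m, q, rfl⟩ := ih
    exact ⟨m + 1, Fin.cons a q, by simp [Fin.sum_univ_succ, sq]⟩

theorem IsSumSq.eval_nonneg {p : Polynomial ℝ} (hp : IsSumSq p) (t : ℝ) : 0 ≤ p.eval t :=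
  (hp.map (Polynomial.evalRingHom t)).nonneg

namespace Polynomial

theorem eval_nonneg_of_eval_mul_nonneg {d q : ℝ[X]} (hd₀ : d ≠ 0) (hd : ∀ t, 0 ≤ d.eval t)
    (hdq : ∀ t, 0 ≤ (d * q).eval t) (t : ℝ) : 0 ≤ q.eval t := by
  have hdense : Dense {s | d.IsRoot s}ᶜ := (finite_setOfPred_isRoot hd₀).countable.dense_compl ℝ
  refine hdense.induction (P := fun s => 0 ≤ q.eval s) (fun s hs => ?_)
    (isClosed_le continuous_const q.continuous) t
  have hds : 0 < d.eval s := (hd s).lt_of_ne' hs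
  exact nonneg_of_mul_nonneg_right (by simpa using hdq s) hds

theorem sq_dvd_of_isRoot_of_eval_nonneg {p : ℝ[X]} (hp : ∀ t, 0 ≤ p.eval t) {a : ℝ}
    (ha : p.IsRoot a) : (X - C a) ^ 2 ∣ p := by
  rcases eq_or_ne p 0 with rfl | hp₀
  · exact dvd_zero _
  have hmin : IsLocalMin (fun t => p.eval t) a :=
    Filter.Eventually.of_forall fun t => by simpa [ha.eq_zero] using hp t
  have hderiv : p.derivative.IsRoot a := by
    simpa [Polynomial.deriv] using hmin.deriv_eq_zero
  exact (le_rootMultiplicity_iff hp₀).1 ((one_lt_rootMultiplicity_iff_isRoot hp₀).2 ⟨ha, hderiv⟩)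

theorem exists_isSumSq_dvd_of_eval_nonneg {p : ℝ[X]} (hp : ∀ t, 0 ≤ p.eval t)
    (hdeg : 0 < p.natDegree) : ∃ d : ℝ[X], IsSumSq d ∧ 0 < d.natDegree ∧ d ∣ p := by
  obtain ⟨z, hz⟩ := IsAlgClosed.exists_aeval_eq_zero ℂ p (natDegree_pos_iff_degree_pos.1 hdeg).ne'
  by_cases him : z.im = 0
  · have hroot : p.IsRoot z.re := by
      have hz' : z = algebraMap ℝ ℂ z.re := Complex.ext rfl (by simp [him])
      rwa [hz', aeval_algebraMap_apply_eq_algebraMap_eval,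
        map_eq_zero_iff _ (FaithfulSMul.algebraMap_injective ℝ ℂ)] at hz
    refine ⟨(X - C z.re) ^ 2, ?_, by simp [natDegree_pow], sq_dvd_of_isRoot_of_eval_nonneg hp hroot⟩
    simp [sq]
  · have hsq : (X ^ 2 - C (2 * z.re) * X + C (‖z‖ ^ 2) : ℝ[X]) =
        (X - C z.re) * (X - C z.re) + (C z.im * C z.im + 0) := by
      rw [Complex.sq_norm, Complex.normSq_apply]
      simp only [C_add, C_mul, map_ofNat]
      ring
    have hdeg₂ : natDegree (X ^ 2 - C (2 * z.re) * X + C (‖z‖ ^ 2) : ℝ[X]) = 2 := by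
      compute_degree!
    refine ⟨_, ?_, by omega, quadratic_dvd_of_aeval_eq_zero_im_ne_zero p hz him⟩
    rw [hsq]
    exact .sq_add _ (.sq_add _ .zero)

theorem isSumSq_of_eval_nonneg {p : ℝ[X]} (hp : ∀ t, 0 ≤ p.eval t) : IsSumSq p := by
  induction hn : p.natDegree using Nat.strong_induction_on generalizing p with
  | _ n ih =>
  rcases Nat.eq_zero_or_pos n with rfl | hpos
  · rw [eq_C_of_natDegree_eq_zero hn] at hp ⊢
    exact (Real.isSquare_iff.2 (by simpa using hp 0)).isSumSq.map C
  obtain ⟨d, hd, hd_deg, q, rfl⟩ := exists_isSumSq_dvd_of_eval_nonneg hp (hn ▸ hpos)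
  have hd₀ : d ≠ 0 := ne_zero_of_natDegree_gt hd_deg
  have hq₀ : q ≠ 0 := by rintro rfl; simp at hn; omega
  have hq := eval_nonneg_of_eval_mul_nonneg hd₀ hd.eval_nonneg hp
  refine hd.mul (ih q.natDegree ?_ hq rfl)
  rw [← hn, natDegree_mul hd₀ hq₀]
  omega

end Polynomial

theorem MvPolynomial.eval_aeval_X {R σ : Type*} [CommSemiring R] (x : σ → R) (i : σ)
    (g : Polynomial R) : eval x (Polynomial.aeval (X i) g) = g.eval (x i) := by
  simpa [coe_aeval_eq_eval] using (Polynomial.aeval_algHom_apply (aeval x) (X i) g).symm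

section SeparableSum

variable {ι : Type*} [Fintype ι] {α : ι → Type*} (f : ∀ i, α i → ℝ)

theorem bddBelow_range_of_sum_nonneg (x₀ : ∀ i, α i) (h : ∀ x : ∀ i, α i, 0 ≤ ∑ i, f i (x i))
    (i : ι) : BddBelow (Set.range (f i)) := by
  classical
  refine ⟨-∑ j ∈ Finset.univ \ {i}, f j (x₀ j), ?_⟩
  rintro _ ⟨t, rfl⟩
  have h_upd := h (Function.update x₀ i t)
  simp only [Function.apply_update f x₀ i t,
    Finset.sum_update_of_mem (Finset.mem_univ i)] at h_upd
  linarith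

theorem sum_iInf_nonneg_of_sum_nonneg [∀ i, Nonempty (α i)]
    (h : ∀ x : ∀ i, α i, 0 ≤ ∑ i, f i (x i)) : 0 ≤ ∑ i, ⨅ t, f i t := by
  refine le_of_forall_pos_le_add fun ε hε => ?_
  set δ := ε / (Fintype.card ι + 1)
  have hδ : 0 < δ := by positivity
  choose x hx using fun i => exists_lt_of_ciInf_lt (lt_add_of_pos_right (⨅ t, f i t) hδ)
  calc 0 ≤ ∑ i, f i (x i) := h x
    _ ≤ ∑ i, ((⨅ t, f i t) + δ) := Finset.sum_le_sum fun i _ => (hx i).le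
    _ = (∑ i, ⨅ t, f i t) + Fintype.card ι * δ := by simp [Finset.sum_add_distrib]
    _ ≤ (∑ i, ⨅ t, f i t) + ε := by
      gcongr
      rw [mul_div_assoc', div_le_iff₀ (by positivity)]
      nlinarith

end SeparableSum

theorem exists_nonneg_decomposition_of_separable {σ : Type*} [Fintype σ] (ps : σ → Polynomial ℝ)
    (hp : ∀ x : σ → ℝ, 0 ≤ ∑ i, (ps i).eval (x i)) :
    ∃ (r : σ → Polynomial ℝ) (c : ℝ), (∀ i, ∀ t : ℝ, 0 ≤ (r i).eval t) ∧ 0 ≤ c ∧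
      ∑ i, Polynomial.aeval (X i) (ps i) = (∑ i, Polynomial.aeval (X i) (r i)) + C c := by
  have hbdd := bddBelow_range_of_sum_nonneg (fun i t => (ps i).eval t) 0 hp
  refine ⟨fun i => ps i - Polynomial.C (⨅ t, (ps i).eval t), ∑ i, ⨅ t, (ps i).eval t,
    fun i t => ?_, sum_iInf_nonneg_of_sum_nonneg _ hp, ?_⟩
  · simpa using ciInf_le (hbdd i) t
  · simp [Finset.sum_sub_distrib, MvPolynomial.algebraMap_eq]

theorem nonneg_separable_decomposition {n : ℕ}
    (p : MvPolynomial (Fin n) ℝ) (ps : Fin n → Polynomial ℝ)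
    (hsep : p = ∑ i, Polynomial.aeval (MvPolynomial.X i) (ps i)) :
    ((∀ x : Fin n → ℝ, 0 ≤ eval x p) →
      ∃ (r : Fin n → Polynomial ℝ) (c : ℝ),
        (∀ i, ∀ t : ℝ, 0 ≤ (r i).eval t) ∧ 0 ≤ c ∧
        p = (∑ i, Polynomial.aeval (MvPolynomial.X i) (r i)) + MvPolynomial.C c)
    ∧ ((∀ x : Fin n → ℝ, 0 ≤ eval x p) ↔ IsSOS p) := by
  have heval (x : Fin n → ℝ) : eval x p = ∑ i, (ps i).eval (x i) := by
    simp [hsep, eval_aeval_X]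
  have decomp (hp : ∀ x : Fin n → ℝ, 0 ≤ eval x p) :=
    hsep ▸ exists_nonneg_decomposition_of_separable ps (by simpa [heval] using hp)
  refine ⟨decomp, fun hp => ?_, fun hsos x => ?_⟩
  · obtain ⟨r, c, hr, hc, hpr⟩ := decomp hp
    rw [isSOS_iff_isSumSq, hpr]
    refine .add (.sum fun i _ => ?_) ((Real.isSquare_iff.2 hc).isSumSq.map C)
    exact (Polynomial.isSumSq_of_eval_nonneg (hr i)).map (Polynomial.aeval (X i))
  · exact ((isSOS_iff_isSumSq.1 hsos).map (eval x)).nonneg
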